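/- arXiv:1910.13849 — 6 statements merged into one kernel-verified Lean document; each statement's English description precedes it below -/
import Mathlib

section
/- For independent and uniformly distributed matrices A ∈ F^{m×n} and B ∈ F^{n×p} over a finite field F, any SDMM scheme with N servers that is secure against any ℓ colluding servers and decodable from all N servers must satisfy the uplink cost bound K_UL ≥ N/(N−ℓ), where K_UL = (Σ_{i=1}^N |Ã_i| + |B̃_i|)/(n(m+p)). -/
open Finset

variable {Ω : Type*} [Fintype Ω]

/-- Probability mass of the event `X = s` under the pmf `p` on a finite sample space. -/
noncomputable def pm (p : Ω → ℝ) {S : Type*} [DecidableEq S] (X : Ω → S) (s : S) : ℝ :=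
  ∑ ω ∈ Finset.univ.filter (fun ω => X ω = s), p ω

/-- Shannon entropy of a finite random variable `X` under the pmf `p`. -/
noncomputable def ent (p : Ω → ℝ) {S : Type*} [Fintype S] [DecidableEq S] (X : Ω → S) : ℝ :=
  -∑ s, pm p X s * Real.log (pm p X s)

/-- Conditional entropy `H(X | Y) = H(X, Y) - H(Y)`. -/
noncomputable def condEnt (p : Ω → ℝ) {S T : Type*} [Fintype S] [DecidableEq S]
    [Fintype T] [DecidableEq T] (X : Ω → S) (Y : Ω → T) : ℝ :=
  ent p (fun ω => (X ω, Y ω)) - ent p Y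

/-- Mutual information `I(X ; Y) = H(X) + H(Y) - H(X, Y)`. -/
noncomputable def mutInf (p : Ω → ℝ) {S T : Type*} [Fintype S] [DecidableEq S]
    [Fintype T] [DecidableEq T] (X : Ω → S) (Y : Ω → T) : ℝ :=
  ent p X + ent p Y - ent p (fun ω => (X ω, Y ω))

/-!
Fix a set `L` of `ℓ` colluding servers and write `W = (A, B)`, `U` for the uploads to `L` and
`V'` for the uploads to the other `N - ℓ` servers. Security makes `U` independent of `W`, and
decodability makes `W` a function of `(U, V')`, so
`H(U) + H(W) = H(U, W) ≤ H(U, V') ≤ H(U) + H(V')`, i.e.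
`n(m+p) log |F| = H(W) ≤ H(V') ≤ (∑_{i ∉ L} |Ãᵢ| + |B̃ᵢ|) log |F|`.
Averaging over all `ℓ`-subsets `L`, each server lies outside `L` for a fraction `(N - ℓ)/N`
of them, which gives the bound.
-/

section Mass

variable {p : Ω → ℝ} {S T : Type*} [DecidableEq T]

lemma pm_comp_eq_zero_of_notMem_range {g : S → T} (X : Ω → S) {t : T}
    (ht : t ∉ Set.range g) : pm p (fun ω => g (X ω)) t = 0 :=
  sum_eq_zero fun ω hω => absurd ⟨X ω, (mem_filter.1 hω).2⟩ ht

variable [DecidableEq S]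

lemma pm_nonneg (hp0 : ∀ ω, 0 ≤ p ω) (X : Ω → S) (s : S) : 0 ≤ pm p X s :=
  sum_nonneg fun ω _ => hp0 ω

lemma sum_pm [Fintype S] (X : Ω → S) : ∑ s, pm p X s = ∑ ω, p ω :=
  sum_fiberwise univ X p

lemma pm_comp_of_injective {g : S → T} (hg : g.Injective) (X : Ω → S) (s : S) :
    pm p (fun ω => g (X ω)) (g s) = pm p X s := by
  simp only [pm, hg.eq_iff]

lemma sum_pm_pair_left [Fintype S] (X : Ω → S) (Y : Ω → T) (t : T) :
    ∑ s, pm p (fun ω => (X ω, Y ω)) (s, t) = pm p Y t := by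
  simp only [pm, Prod.mk.injEq]
  rw [← sum_fiberwise (univ.filter fun ω => Y ω = t) X p]
  simp only [filter_filter, and_comm]

lemma sum_pm_pair_right [Fintype T] (X : Ω → S) (Y : Ω → T) (s : S) :
    ∑ t, pm p (fun ω => (X ω, Y ω)) (s, t) = pm p X s := by
  simp only [pm, Prod.mk.injEq]
  rw [← sum_fiberwise (univ.filter fun ω => X ω = s) Y p]
  simp only [filter_filter]

lemma pm_pair_le_right [Fintype S] (hp0 : ∀ ω, 0 ≤ p ω) (X : Ω → S) (Y : Ω → T)
    (s : S) (t : T) :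
    pm p (fun ω => (X ω, Y ω)) (s, t) ≤ pm p Y t :=
  sum_pm_pair_left X Y t ▸
    single_le_sum (f := fun s => pm p (fun ω => (X ω, Y ω)) (s, t))
      (fun _ _ => pm_nonneg hp0 _ _) (mem_univ s)

lemma pm_pair_le_left [Fintype T] (hp0 : ∀ ω, 0 ≤ p ω) (X : Ω → S) (Y : Ω → T)
    (s : S) (t : T) :
    pm p (fun ω => (X ω, Y ω)) (s, t) ≤ pm p X s :=
  sum_pm_pair_right X Y s ▸
    single_le_sum (f := fun t => pm p (fun ω => (X ω, Y ω)) (s, t))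
      (fun _ _ => pm_nonneg hp0 _ _) (mem_univ t)

lemma sum_pm_pair_mul_fst [Fintype S] [Fintype T] (X : Ω → S) (Y : Ω → T) (φ : S → ℝ) :
    ∑ st : S × T, pm p (fun ω => (X ω, Y ω)) st * φ st.1 = ∑ s, pm p X s * φ s := by
  rw [Fintype.sum_prod_type]
  exact sum_congr rfl fun s _ => by dsimp only; rw [← sum_mul, sum_pm_pair_right]

lemma sum_pm_pair_mul_snd [Fintype S] [Fintype T] (X : Ω → S) (Y : Ω → T) (φ : T → ℝ) :
    ∑ st : S × T, pm p (fun ω => (X ω, Y ω)) st * φ st.2 = ∑ t, pm p Y t * φ t := by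
  rw [Fintype.sum_prod_type, sum_comm]
  exact sum_congr rfl fun t _ => by dsimp only; rw [← sum_mul, sum_pm_pair_left]

end Mass

lemma sum_mul_log_le_sum_mul_log_self {ι : Type*} [Fintype ι] {w v : ι → ℝ}
    (hw : ∀ i, 0 ≤ w i) (hv : ∀ i, 0 ≤ v i) (hvw : ∑ i, v i ≤ ∑ i, w i)
    (hpos : ∀ i, 0 < w i → 0 < v i) :
    ∑ i, w i * Real.log (v i) ≤ ∑ i, w i * Real.log (w i) := by
  have key : ∀ i, w i * Real.log (v i) - w i * Real.log (w i) ≤ v i - w i := by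
    intro i
    rcases (hw i).eq_or_lt with h0 | h0
    · simpa [← h0] using hv i
    · have hvi := hpos i h0
      calc w i * Real.log (v i) - w i * Real.log (w i)
          = w i * Real.log (v i / w i) := by rw [← mul_sub, Real.log_div hvi.ne' h0.ne']
        _ ≤ w i * (v i / w i - 1) :=
            mul_le_mul_of_nonneg_left (Real.log_le_sub_one_of_pos (div_pos hvi h0)) (hw i)
        _ = v i - w i := by field_simp
  have hsum := sum_le_sum fun i (_ : i ∈ univ) => key i
  rw [sum_sub_distrib, sum_sub_distrib] at hsum
  linarith

section Entropy

variable {p : Ω → ℝ} {S T : Type*} [Fintype S] [DecidableEq S] [Fintype T] [DecidableEq T]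

lemma ent_comp_of_injective {g : S → T} (hg : g.Injective) (X : Ω → S) :
    ent p (fun ω => g (X ω)) = ent p X := by
  unfold ent
  congr 1
  refine (Fintype.sum_of_injective g hg _ _ (fun t ht => ?_) fun s => ?_).symm
  · rw [pm_comp_eq_zero_of_notMem_range X ht, zero_mul]
  · rw [pm_comp_of_injective hg]

lemma ent_le_ent_pair (hp0 : ∀ ω, 0 ≤ p ω) (X : Ω → S) (Y : Ω → T) :
    ent p Y ≤ ent p (fun ω => (X ω, Y ω)) := by
  unfold ent
  rw [neg_le_neg_iff, ← sum_pm_pair_mul_snd X Y]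
  refine sum_le_sum fun st _ => ?_
  rcases (pm_nonneg hp0 (fun ω => (X ω, Y ω)) st).eq_or_lt with h0 | h0
  · simp [← h0]
  · exact mul_le_mul_of_nonneg_left (Real.log_le_log h0 (pm_pair_le_right hp0 X Y _ _)) h0.le

lemma ent_le_of_comp (hp0 : ∀ ω, 0 ≤ p ω) {X : Ω → S} {Y : Ω → T} (g : S → T)
    (hY : ∀ ω, Y ω = g (X ω)) : ent p Y ≤ ent p X :=
  calc ent p Y ≤ ent p (fun ω => (X ω, Y ω)) := ent_le_ent_pair hp0 X Y
    _ = ent p X := by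
        simp only [hY]
        exact ent_comp_of_injective (g := fun s => (s, g s))
          (fun _ _ h => (Prod.ext_iff.1 h).1) X

lemma ent_pair_le_add (hp0 : ∀ ω, 0 ≤ p ω) (hp1 : ∑ ω, p ω = 1)
    (X : Ω → S) (Y : Ω → T) :
    ent p (fun ω => (X ω, Y ω)) ≤ ent p X + ent p Y := by
  have hX : ∀ st : S × T, 0 < pm p (fun ω => (X ω, Y ω)) st → 0 < pm p X st.1 := fun st h =>
    h.trans_le (pm_pair_le_left hp0 X Y _ _)
  have hY : ∀ st : S × T, 0 < pm p (fun ω => (X ω, Y ω)) st → 0 < pm p Y st.2 := fun st h =>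
    h.trans_le (pm_pair_le_right hp0 X Y _ _)
  have hgibbs := sum_mul_log_le_sum_mul_log_self (w := pm p (fun ω => (X ω, Y ω)))
    (v := fun st => pm p X st.1 * pm p Y st.2) (fun _ => pm_nonneg hp0 _ _)
    (fun _ => mul_nonneg (pm_nonneg hp0 _ _) (pm_nonneg hp0 _ _))
    (by rw [Fintype.sum_prod_type, ← sum_mul_sum, sum_pm, sum_pm, sum_pm, hp1, one_mul])
    (fun st h => mul_pos (hX st h) (hY st h))
  have hsplit : ∑ st, pm p (fun ω => (X ω, Y ω)) st * Real.log (pm p X st.1 * pm p Y st.2)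
      = ∑ s, pm p X s * Real.log (pm p X s) + ∑ t, pm p Y t * Real.log (pm p Y t) := by
    rw [← sum_pm_pair_mul_fst X Y, ← sum_pm_pair_mul_snd X Y, ← sum_add_distrib]
    refine sum_congr rfl fun st _ => ?_
    rcases (pm_nonneg hp0 (fun ω => (X ω, Y ω)) st).eq_or_lt with h0 | h0
    · rw [← h0]; ring
    · rw [Real.log_mul (hX st h0).ne' (hY st h0).ne', mul_add]
  unfold ent
  linarith

lemma ent_le_log_card [Nonempty S] (hp0 : ∀ ω, 0 ≤ p ω) (hp1 : ∑ ω, p ω = 1)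
    (X : Ω → S) :
    ent p X ≤ Real.log (Fintype.card S) := by
  have hc : (0 : ℝ) < Fintype.card S := by exact_mod_cast Fintype.card_pos
  have hgibbs := sum_mul_log_le_sum_mul_log_self (w := pm p X)
    (v := fun _ => (Fintype.card S : ℝ)⁻¹) (fun _ => pm_nonneg hp0 _ _)
    (fun _ => inv_nonneg.mpr hc.le)
    (by rw [sum_const, sum_pm, hp1, card_univ, nsmul_eq_mul, mul_inv_cancel₀ hc.ne'])
    (fun _ _ => inv_pos.mpr hc)
  rw [← sum_mul, sum_pm, hp1, one_mul, Real.log_inv] at hgibbs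
  unfold ent
  linarith

lemma condEnt_comp_right_of_injective {R : Type*} [Fintype R] [DecidableEq R] {g : T → R}
    (hg : g.Injective) (X : Ω → S) (Y : Ω → T) :
    condEnt p X (fun ω => g (Y ω)) = condEnt p X Y := by
  unfold condEnt
  rw [ent_comp_of_injective hg Y]
  congr 1
  exact ent_comp_of_injective (Function.injective_id.prodMap hg) (fun ω => (X ω, Y ω))

end Entropy

section Servers

variable {p : Ω → ℝ} {ι : Type*} [Fintype ι] [DecidableEq ι] {E : ι → Type*}
  [∀ i, Fintype (E i)] [∀ i, DecidableEq (E i)] {S : Type*} [Fintype S] [DecidableEq S]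

lemma ent_le_ent_compl_of_secure_of_decodable (hp0 : ∀ ω, 0 ≤ p ω) (hp1 : ∑ ω, p ω = 1)
    (X : (i : ι) → Ω → E i) (W : Ω → S) (L : Finset ι)
    (hsec : mutInf p (fun ω (i : L) => X i ω) W = 0)
    (hdec : condEnt p W (fun ω i => X i ω) = 0) :
    ent p W ≤ ent p (fun ω (i : ↥Lᶜ) => X i ω) := by
  set U := fun ω (i : L) => X i ω
  set V := fun ω i => X i ω
  set V' := fun ω (i : ↥Lᶜ) => X i ω
  have hUW : ent p (fun ω => (U ω, W ω)) ≤ ent p (fun ω => (W ω, V ω)) :=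
    ent_le_of_comp hp0 (fun wv => (fun i : L => wv.2 i, wv.1)) fun _ => rfl
  have hV : ent p V ≤ ent p (fun ω => (U ω, V' ω)) :=
    ent_le_of_comp hp0
      (fun uv i => if h : i ∈ L then uv.1 ⟨i, h⟩ else uv.2 ⟨i, mem_compl.2 h⟩)
      fun ω => funext fun i => by by_cases h : i ∈ L <;> simp [U, V, V', h]
  have hUV' := ent_pair_le_add hp0 hp1 U V'
  unfold mutInf at hsec
  unfold condEnt at hdec
  linarith

end Servers

lemma card_pi_prod_fin_fun {ι F : Type*} [DecidableEq ι] [Fintype F] (s : Finset ι)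
    (a b : ι → ℕ) :
    Fintype.card ((i : s) → (Fin (a i) → F) × (Fin (b i) → F))
      = Fintype.card F ^ ∑ i ∈ s, (a i + b i) := by
  rw [Fintype.card_pi]
  simp only [Fintype.card_prod, Fintype.card_fun, Fintype.card_fin, ← pow_add]
  exact (prod_coe_sort s fun i => Fintype.card F ^ (a i + b i)).trans
    (prod_pow_eq_pow_sum _ _ _)

lemma sum_powersetCard_sum_compl {ι : Type*} [Fintype ι] [DecidableEq ι] (ℓ : ℕ)
    (f : ι → ℝ) :
    ∑ L ∈ powersetCard ℓ (univ : Finset ι), ∑ i ∈ Lᶜ, f i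
      = (Fintype.card ι - 1).choose ℓ * ∑ i, f i := by
  have hfiber : ∀ i : ι, {L ∈ powersetCard ℓ (univ : Finset ι) | i ∈ Lᶜ}
      = powersetCard ℓ ((univ : Finset ι).erase i) := by
    intro i
    ext L
    simp only [mem_filter, mem_powersetCard, mem_compl, subset_erase, subset_univ, true_and]
    tauto
  rw [sum_comm' (t' := univ)
    (s' := fun i => {L ∈ powersetCard ℓ (univ : Finset ι) | i ∈ Lᶜ})
    (fun L i => by simp only [mem_filter, mem_univ, true_and, and_comm]), mul_sum]
  refine sum_congr rfl fun i _ => ?_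
  rw [sum_const, hfiber, card_powersetCard, card_erase_of_mem (mem_univ i), card_univ,
    nsmul_eq_mul]

lemma card_mul_le_mul_sum_of_le_sum_compl {ι : Type*} [Fintype ι] [DecidableEq ι] {ℓ : ℕ}
    (hℓ : ℓ < Fintype.card ι) (f : ι → ℝ) (c : ℝ)
    (h : ∀ L : Finset ι, L.card = ℓ → c ≤ ∑ i ∈ Lᶜ, f i) :
    (Fintype.card ι : ℝ) * c ≤ ((Fintype.card ι : ℝ) - ℓ) * ∑ i, f i := by
  set N := Fintype.card ι
  have hsum : (N.choose ℓ : ℝ) * c ≤ (N - 1).choose ℓ * ∑ i, f i :=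
    calc (N.choose ℓ : ℝ) * c = ∑ _L ∈ powersetCard ℓ (univ : Finset ι), c := by
          rw [sum_const, card_powersetCard, card_univ, nsmul_eq_mul]
      _ ≤ ∑ L ∈ powersetCard ℓ (univ : Finset ι), ∑ i ∈ Lᶜ, f i :=
          sum_le_sum fun L hL => h L (mem_powersetCard.1 hL).2
      _ = (N - 1).choose ℓ * ∑ i, f i := sum_powersetCard_sum_compl ℓ f
  have hchoose : ((N - 1).choose ℓ : ℝ) * N = N.choose ℓ * (N - ℓ) := by
    have h := Nat.choose_mul_succ_eq (N - 1) ℓ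
    rw [Nat.sub_add_cancel (by omega)] at h
    rw [← Nat.cast_sub hℓ.le]
    exact_mod_cast h
  have hpos : (0 : ℝ) < (N - 1).choose ℓ := Nat.cast_pos.2 (Nat.choose_pos (by omega))
  have hNℓ : (0 : ℝ) ≤ N - ℓ := sub_nonneg.2 (by exact_mod_cast hℓ.le)
  refine le_of_mul_le_mul_left ?_ hpos
  calc ((N - 1).choose ℓ : ℝ) * (N * c) = (N - ℓ) * (N.choose ℓ * c) := by
        rw [← mul_assoc, hchoose]; ring
    _ ≤ (N - ℓ) * ((N - 1).choose ℓ * ∑ i, f i) := mul_le_mul_of_nonneg_left hsum hNℓ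
    _ = _ := by ring

/-- For independent uniformly distributed matrices `A ∈ F^{m×n}`,
`B ∈ F^{n×p}` (so that `H(A,B) = n(m+p)·log|F|`), any SDMM scheme with `N` servers
that is decodable from all `N` servers and secure against any `ℓ` colluding servers
satisfies the uplink cost bound `K_UL = (Σᵢ |Ãᵢ| + |B̃ᵢ|)/(n(m+p)) ≥ N/(N-ℓ)`. -/
theorem sdmm_uplink_bound
    {Ω : Type*} [Fintype Ω] (p : Ω → ℝ)
    (hp0 : ∀ ω, 0 ≤ p ω) (hp1 : ∑ ω, p ω = 1)
    {F : Type*} [Field F] [Fintype F] [DecidableEq F]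
    (m n q N ℓ : ℕ) (hn : 0 < n) (hmq : 0 < m + q) (hℓN : ℓ < N)
    (A : Ω → Matrix (Fin m) (Fin n) F) (B : Ω → Matrix (Fin n) (Fin q) F)
    (a b : Fin N → ℕ)
    (At : (i : Fin N) → Ω → (Fin (a i) → F))
    (Bt : (i : Fin N) → Ω → (Fin (b i) → F))
    -- A and B are independent and uniform, hence `H(A,B) = n(m+p) log |F|`:
    (huniform : ent p (fun ω => (A ω, B ω))
      = (n : ℝ) * ((m : ℝ) + (q : ℝ)) * Real.log (Fintype.card F))
    -- decodability: `H(A,B | Ã_{[1:N]}, B̃_{[1:N]}) = 0`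
    (hdec : condEnt p (fun ω => (A ω, B ω))
      (fun ω => ((fun i => At i ω), (fun i => Bt i ω))) = 0)
    -- security: `I(Ã_L, B̃_L ; A, B) = 0` for every `L` of size `ℓ`
    (hsec : ∀ L : Finset (Fin N), L.card = ℓ →
      mutInf p (fun ω => (fun i : {x // x ∈ L} => (At i.1 ω, Bt i.1 ω)))
        (fun ω => (A ω, B ω)) = 0) :
    ((∑ i, (a i + b i) : ℕ) : ℝ) / ((n : ℝ) * ((m : ℝ) + (q : ℝ)))
      ≥ (N : ℝ) / ((N : ℝ) - (ℓ : ℝ)) := by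
  have hlogF : 0 < Real.log (Fintype.card F) :=
    Real.log_pos (by exact_mod_cast Fintype.one_lt_card)
  have hdec' : condEnt p (fun ω => (A ω, B ω)) (fun ω i => (At i ω, Bt i ω)) = 0 := by
    rw [← hdec]
    exact condEnt_comp_right_of_injective (Equiv.arrowProdEquivProdArrow _ _ _).symm.injective _
      (fun ω => ((fun i => At i ω), (fun i => Bt i ω)))
  have hcompl : ∀ L : Finset (Fin N), L.card = ℓ →
      (n : ℝ) * (m + q) ≤ ∑ i ∈ Lᶜ, ((a i : ℝ) + b i) := by
    intro L hL
    have hW := ent_le_ent_compl_of_secure_of_decodable hp0 hp1 (fun i ω => (At i ω, Bt i ω))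
      (fun ω => (A ω, B ω)) L (hsec L hL) hdec'
    rw [huniform] at hW
    replace hW := hW.trans (ent_le_log_card hp0 hp1 _)
    rw [card_pi_prod_fin_fun, Nat.cast_pow, Real.log_pow] at hW
    exact_mod_cast le_of_mul_le_mul_right hW hlogF
  have hN := card_mul_le_mul_sum_of_le_sum_compl (by simpa using hℓN) _ _ hcompl
  rw [Fintype.card_fin] at hN
  have hK : (0 : ℝ) < n * (m + q) := mul_pos (by exact_mod_cast hn) (by exact_mod_cast hmq)
  rw [ge_iff_le, div_le_div_iff₀ (sub_pos.2 (by exact_mod_cast hℓN)) hK]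
  push_cast
  linarith
end

section
/- Let f, q ≥ 1 be integers, g ∈ {f,q}, ḡ the other element, ℓ ≥ 1, N ≥ fq + g + 2ℓ − 1, and ρ = m/p > 0. Then for ρ ∈ (0, 1/max(f,q)] ∪ (max(f,q), ∞), K_UL^GSCSA(f,q,g)(ρ) ≤ K_UL^USCSA(f,q,g)(ρ), where K_UL^USCSA(f,q,g)(ρ) = min( N(1 + ρ·ḡ/g)/(1+ρ), N(ḡ/g + ρ)/(1+ρ) ) and K_UL^GSCSA(f,q,g)(ρ) = min( (N/f)(ḡf + ρ·ḡ/q)/(1+ρ), (N/f)(ḡ/q + ρ·ḡf)/(1+ρ) ), assuming g, ḡ > 1. -/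
/-- Uplink cost of the USCSA(f,q,g) scheme as a function of the aspect ratio
`ρ = m/p`, where `g ∈ {f,q}` and `gb` is the other element:
`K_UL^USCSA = min( N(1+ρ·gb/g)/(1+ρ), N(gb/g+ρ)/(1+ρ) )`. -/
noncomputable def KulUSCSA (N g gb ρ : ℝ) : ℝ :=
  min (N * (1 + ρ * (gb / g)) / (1 + ρ)) (N * (gb / g + ρ) / (1 + ρ))

/-- Uplink cost of the GSCSA(f,q,g) scheme as a function of `ρ = m/p`:
`K_UL^GSCSA = min( (N/f)(gbf + ρ·gb/q)/(1+ρ), (N/f)(gb/q + ρ·gbf)/(1+ρ) )`. -/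
noncomputable def KulGSCSA (N f q gb ρ : ℝ) : ℝ :=
  min ((N / f) * (gb * f + ρ * (gb / q)) / (1 + ρ))
      ((N / f) * (gb / q + ρ * (gb * f)) / (1 + ρ))

/-!
Since `{g, gb} = {f, q}`, the GSCSA cost is `min (N(gb + ρ/g)) (N(1/g + ρ gb)) / (1 + ρ)`.
Cleared of denominators, each of the four comparisons with the USCSA terms is the
nonnegativity of a product `(g - 1)(…)` or `(gb - 1)(…)`: for small `ρ` the second factor is
`1 - ρ g` or `1 - ρ gb`, for large `ρ` it is `ρ - g` or `ρ - gb`.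
-/

theorem kulGSCSA_eq_of_mul_eq {N f q g gb ρ : ℝ} (hf : f ≠ 0) (hq : q ≠ 0)
    (hfq : f * q = g * gb) :
    KulGSCSA N f q gb ρ =
      min (N * (gb + ρ / g) / (1 + ρ)) (N * (1 / g + ρ * gb) / (1 + ρ)) := by
  have hgb : gb ≠ 0 := by rintro rfl; simp_all
  obtain rfl : g = f * q / gb := eq_div_of_mul_eq hgb hfq.symm
  unfold KulGSCSA
  congr 2 <;> field_simp

theorem le_kulUSCSA {N a b ρ x : ℝ} (hN : 0 ≤ N) (hρ : 0 ≤ ρ)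
    (h₁ : x ≤ 1 + ρ * (b / a)) (h₂ : x ≤ b / a + ρ) :
    N * x / (1 + ρ) ≤ KulUSCSA N a b ρ :=
  le_min (by gcongr) (by gcongr)

theorem inv_add_mul_le_kulUSCSA {N a b ρ : ℝ} (hN : 0 ≤ N) (ha : 1 ≤ a) (hb : 1 ≤ b)
    (hρ : 0 ≤ ρ) (hρmax : ρ * max a b ≤ 1) :
    N * (1 / a + ρ * b) / (1 + ρ) ≤ KulUSCSA N a b ρ := by
  have ha₀ : 0 < a := by linarith
  have hρa : ρ * a ≤ 1 := (mul_le_mul_of_nonneg_left (le_max_left a b) hρ).trans hρmax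
  have hρb : ρ * b ≤ 1 := (mul_le_mul_of_nonneg_left (le_max_right a b) hρ).trans hρmax
  apply le_kulUSCSA hN hρ
  · rw [← sub_nonneg,
      show 1 + ρ * (b / a) - (1 / a + ρ * b) = (a - 1) * (1 - ρ * b) / a by
        field_simp; ring]
    exact div_nonneg (mul_nonneg (by linarith) (by linarith)) ha₀.le
  · rw [← sub_nonneg,
      show b / a + ρ - (1 / a + ρ * b) = (b - 1) * (1 - ρ * a) / a by
        field_simp; ring]
    exact div_nonneg (mul_nonneg (by linarith) (by linarith)) ha₀.le

theorem add_div_le_kulUSCSA {N a b ρ : ℝ} (hN : 0 ≤ N) (ha : 1 ≤ a) (hb : 1 ≤ b)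
    (hρmax : max a b ≤ ρ) :
    N * (b + ρ / a) / (1 + ρ) ≤ KulUSCSA N a b ρ := by
  have ha₀ : 0 < a := by linarith
  have hρa : a ≤ ρ := (le_max_left a b).trans hρmax
  have hρb : b ≤ ρ := (le_max_right a b).trans hρmax
  apply le_kulUSCSA hN (by linarith)
  · rw [← sub_nonneg,
      show 1 + ρ * (b / a) - (b + ρ / a) = (b - 1) * (ρ - a) / a by
        field_simp; ring]
    exact div_nonneg (mul_nonneg (by linarith) (by linarith)) ha₀.le
  · rw [← sub_nonneg,
      show b / a + ρ - (b + ρ / a) = (a - 1) * (ρ - b) / a by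
        field_simp; ring]
    exact div_nonneg (mul_nonneg (by linarith) (by linarith)) ha₀.le

theorem gscsa_le_uscsa_uplink_general
    (f q g gb N : ℕ) (hf : 1 ≤ f) (hq : 1 ≤ q)
    (hg : (g = f ∧ gb = q) ∨ (g = q ∧ gb = f))
    (ρ : ℝ) (hρ : 0 < ρ)
    (hrange : ρ ≤ 1 / ((max f q : ℕ) : ℝ) ∨ ((max f q : ℕ) : ℝ) < ρ) :
    KulGSCSA N f q gb ρ ≤ KulUSCSA N g gb ρ := by
  obtain ⟨hfq, hmax⟩ : f * q = g * gb ∧ max f q = max g gb := by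
    rcases hg with ⟨rfl, rfl⟩ | ⟨rfl, rfl⟩
    · exact ⟨rfl, rfl⟩
    · exact ⟨mul_comm _ _, max_comm _ _⟩
  have ha : (1 : ℝ) ≤ g := by exact_mod_cast (show 1 ≤ g by omega)
  have hb : (1 : ℝ) ≤ gb := by exact_mod_cast (show 1 ≤ gb by omega)
  have hfq' : (f : ℝ) * q = g * gb := by exact_mod_cast hfq
  rw [kulGSCSA_eq_of_mul_eq (by positivity) (by positivity) hfq']
  rw [hmax, Nat.cast_max] at hrange
  rcases hrange with hsmall | hlarge
  · rw [le_div_iff₀ (by positivity)] at hsmall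
    exact (min_le_right _ _).trans (inv_add_mul_le_kulUSCSA N.cast_nonneg ha hb hρ.le hsmall)
  · exact (min_le_left _ _).trans (add_div_le_kulUSCSA N.cast_nonneg ha hb hlarge.le)

/-- For `g ∈ {f,q}` with `g, gb > 1`, `ℓ ≥ 1`,
`N ≥ fq + g + 2ℓ − 1` and aspect ratio `ρ ∈ (0, 1/max(f,q)] ∪ (max(f,q), ∞)`,
the GSCSA uplink cost is at most the USCSA uplink cost. -/
theorem gscsa_le_uscsa_uplink
    (f q g gb ℓ N : ℕ) (hf : 1 ≤ f) (hq : 1 ≤ q)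
    (hg : (g = f ∧ gb = q) ∨ (g = q ∧ gb = f))
    (hg1 : 1 < g) (hgb1 : 1 < gb) (hℓ : 1 ≤ ℓ)
    (hN : f * q + g + 2 * ℓ - 1 ≤ N)
    (ρ : ℝ) (hρ : 0 < ρ)
    (hrange : ρ ≤ 1 / ((max f q : ℕ) : ℝ) ∨ ((max f q : ℕ) : ℝ) < ρ) :
    KulGSCSA N f q gb ρ ≤ KulUSCSA N g gb ρ :=
  gscsa_le_uscsa_uplink_general f q g gb N hf hq hg ρ hρ hrange
end

section
/- Let f, q ≥ 1 be integers, g ∈ {f,q}, ḡ the other, ℓ ≥ 1, N ≥ fq + g + 2ℓ − 1, ρ = m/p > 0, g, ḡ > 1. For ρ ∈ (1/max(f,q), max(f,q)], K_UL^GSCSA(f,q,g)(ρ) ≥ K_UL^USCSA(f,q,g)(ρ). -/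
set_option maxHeartbeats 1600000 in
/-- For `g ∈ {f,q}` with `g, gb > 1`, `ℓ ≥ 1`,
`N ≥ fq + g + 2ℓ − 1` and `ρ ∈ (1/max(f,q), max(f,q)]`, the GSCSA uplink cost
is at least the USCSA uplink cost. -/
theorem gscsa_ge_uscsa_uplink
    (f q g gb ℓ N : ℕ) (hf : 1 ≤ f) (hq : 1 ≤ q)
    (hg : (g = f ∧ gb = q) ∨ (g = q ∧ gb = f))
    (hg1 : 1 < g) (hgb1 : 1 < gb) (hℓ : 1 ≤ ℓ)
    (hN : f * q + g + 2 * ℓ - 1 ≤ N)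
    (ρ : ℝ) (hρ : 0 < ρ)
    (hrange : 1 / ((max f q : ℕ) : ℝ) < ρ ∧ ρ ≤ ((max f q : ℕ) : ℝ)) :
    KulUSCSA N g gb ρ ≤ KulGSCSA N f q gb ρ := by
  have hF : (1:ℝ) ≤ f := by exact_mod_cast hf
  have hQ : (1:ℝ) ≤ q := by exact_mod_cast hq
  have hG : (1:ℝ) < g := by exact_mod_cast hg1
  have hB : (1:ℝ) < gb := by exact_mod_cast hgb1
  have hN0 : (0:ℝ) ≤ N := Nat.cast_nonneg N
  have hF0 : (0:ℝ) < f := by linarith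
  have hQ0 : (0:ℝ) < q := by linarith
  have hG0 : (0:ℝ) < g := by linarith
  have hB0 : (0:ℝ) < gb := by linarith
  have hFQ : (f:ℝ) * q = g * gb := by
    rcases hg with ⟨h1, h2⟩ | ⟨h1, h2⟩ <;> subst h1 <;> subst h2 <;> push_cast <;> ring
  have hM : ((max f q : ℕ) : ℝ) = max (g:ℝ) (gb:ℝ) := by
    rcases hg with ⟨h1, h2⟩ | ⟨h1, h2⟩ <;> subst h1 <;> subst h2 <;>
      simp [Nat.cast_max, max_comm]
  obtain ⟨hlo, hhi⟩ := hrange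
  rw [hM] at hlo hhi
  have hD : (0:ℝ) < 1 + ρ := by linarith
  have hqe : (q:ℝ) = g * gb / f := by field_simp; linarith [hFQ]
  have e1 : (N:ℝ) / f * (gb * f + ρ * (gb / q)) = N * gb + ρ * N * (1 / g) := by
    rw [hqe]; field_simp <;> ring
  have e2 : (N:ℝ) / f * (gb / q + ρ * (gb * f)) = N * (1 / g) + ρ * N * gb := by
    rw [hqe]; field_simp <;> ring
  unfold KulUSCSA KulGSCSA
  rw [e1, e2]
  rcases le_total (g:ℝ) (gb:ℝ) with hcase | hcase
  · rw [max_eq_right hcase] at hlo hhi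
    have hρb : 1 < ρ * gb := by
      rw [div_lt_iff₀ hB0] at hlo; linarith
    refine le_min ?_ ?_
    · refine (min_le_right _ _).trans ?_
      rw [div_le_div_iff₀ hD hD]
      have key : (N:ℝ) * (gb / g + ρ) ≤ N * gb + ρ * N * (1 / g) := by
        have h1 : (N:ℝ) * (gb / g + ρ) = N * (gb + ρ * g) / g := by
          field_simp <;> ring
        have h2 : ((N:ℝ) * gb + ρ * N * (1 / g)) = N * (gb * g + ρ) / g := by
          field_simp <;> ring
        rw [h1, h2]
        gcongr N * ?_ / g
        nlinarith [mul_nonneg (sub_nonneg.2 hhi) (sub_nonneg.2 hG.le)]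
      exact mul_le_mul_of_nonneg_right key hD.le
    · refine (min_le_left _ _).trans ?_
      rw [div_le_div_iff₀ hD hD]
      have key : (N:ℝ) * (1 + ρ * (gb / g)) ≤ N * (1 / g) + ρ * N * gb := by
        have h1 : (N:ℝ) * (1 + ρ * (gb / g)) = N * (g + ρ * gb) / g := by
          field_simp <;> ring
        have h2 : ((N:ℝ) * (1 / g) + ρ * N * gb) = N * (1 + ρ * gb * g) / g := by
          field_simp <;> ring
        rw [h1, h2]
        gcongr N * ?_ / g
        nlinarith [mul_nonneg (sub_nonneg.2 hρb.le) (sub_nonneg.2 hG.le)]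
      exact mul_le_mul_of_nonneg_right key hD.le
  · rw [max_eq_left hcase] at hlo hhi
    have hρg : 1 < ρ * g := by
      rw [div_lt_iff₀ hG0] at hlo; linarith
    refine le_min ?_ ?_
    · refine (min_le_left _ _).trans ?_
      rw [div_le_div_iff₀ hD hD]
      have key : (N:ℝ) * (1 + ρ * (gb / g)) ≤ N * gb + ρ * N * (1 / g) := by
        have h1 : (N:ℝ) * (1 + ρ * (gb / g)) = N * (g + ρ * gb) / g := by
          field_simp <;> ring
        have h2 : ((N:ℝ) * gb + ρ * N * (1 / g)) = N * (gb * g + ρ) / g := by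
          field_simp <;> ring
        rw [h1, h2]
        gcongr N * ?_ / g
        nlinarith [mul_nonneg (sub_nonneg.2 hB.le) (sub_nonneg.2 hhi)]
      exact mul_le_mul_of_nonneg_right key hD.le
    · refine (min_le_right _ _).trans ?_
      rw [div_le_div_iff₀ hD hD]
      have key : (N:ℝ) * (gb / g + ρ) ≤ N * (1 / g) + ρ * N * gb := by
        have h1 : (N:ℝ) * (gb / g + ρ) = N * (gb + ρ * g) / g := by
          field_simp <;> ring
        have h2 : ((N:ℝ) * (1 / g) + ρ * N * gb) = N * (1 + ρ * gb * g) / g := by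
          field_simp <;> ring
        rw [h1, h2]
        gcongr N * ?_ / g
        nlinarith [mul_nonneg (sub_nonneg.2 hB.le) (sub_nonneg.2 hρg.le)]
      exact mul_le_mul_of_nonneg_right key hD.le
end

section
/- For USCSA(f,q,g) and GSCSA(f,q,g) with recovery threshold Q = fq + g + 2ℓ − 1 ≤ N and g ∈ {f,q}, the additive gap between the reciprocal of the optimal uplink cost K*_UL = N/(N−ℓ) and the reciprocal of the achieved worst-case uplink cost satisfies 1/K*_UL − 1/K̄_UL ≤ 1 − ℓ/N − 2/(N(N − 2ℓ + 1)). -/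
lemma aux_gap (N l X : ℝ) (hN : 0 < N) (hX : 0 < X)
    (hXle : X ≤ N - 2 * l + 1) :
    (N - l) / N - 1 / (N * X / 2)
      ≤ 1 - l / N - 2 / (N * (N - 2 * l + 1)) := by
  have h1 : (N - l) / N = 1 - l / N := by
    field_simp
  rw [h1]
  have h2 : 1 / (N * X / 2) = 2 / (N * X) := by
    rw [div_div_eq_mul_div, one_mul]
  rw [h2]
  have h3 : 2 / (N * (N - 2 * l + 1)) ≤ 2 / (N * X) := by
    apply div_le_div_of_nonneg_left (by norm_num) (by positivity)
    nlinarith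
  linarith

/-- For USCSA/GSCSA with recovery threshold
`Q = fq + g + 2ℓ − 1 ≤ N`, `g ∈ {f,q}`, the additive gap between `1/K*_UL`
(with `K*_UL = N/(N−ℓ)`) and the reciprocal of the achieved worst-case uplink
cost (`N(1+ḡ/g)/2` for USCSA, `Nḡ(1+1/(fq))/2` for GSCSA) is at most
`1 − ℓ/N − 2/(N(N − 2ℓ + 1))`. -/
theorem uscsa_gscsa_additive_gap
    (f q g gb ℓ N : ℕ) (hf : 1 ≤ f) (hq : 1 ≤ q)
    (hg : (g = f ∧ gb = q) ∨ (g = q ∧ gb = f))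
    (hQ : f * q + g + 2 * ℓ - 1 ≤ N) (hN : 2 * ℓ < N) :
    (((N : ℝ) - (ℓ : ℝ)) / (N : ℝ)
        - 1 / ((N : ℝ) * (1 + (gb : ℝ) / (g : ℝ)) / 2)
      ≤ 1 - (ℓ : ℝ) / (N : ℝ) - 2 / ((N : ℝ) * ((N : ℝ) - 2 * (ℓ : ℝ) + 1)))
    ∧ (((N : ℝ) - (ℓ : ℝ)) / (N : ℝ)
        - 1 / ((N : ℝ) * (gb : ℝ) * (1 + 1 / ((f : ℝ) * (q : ℝ))) / 2)
      ≤ 1 - (ℓ : ℝ) / (N : ℝ) - 2 / ((N : ℝ) * ((N : ℝ) - 2 * (ℓ : ℝ) + 1))) := by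
  have hg1 : 1 ≤ g := by rcases hg with ⟨h, _⟩ | ⟨h, _⟩ <;> omega
  have hgb : gb ≤ f * q := by
    rcases hg with ⟨_, h⟩ | ⟨_, h⟩ <;> nlinarith
  have hkey : f * q + 2 * ℓ ≤ N := by
    have : 1 ≤ f * q := Nat.one_le_iff_ne_zero.mpr (by positivity)
    omega
  have hNpos : (0 : ℝ) < N := by
    have : 0 < N := by omega
    exact_mod_cast this
  have hkeyR : (f : ℝ) * q + 2 * ℓ ≤ N := by exact_mod_cast hkey
  have hgbR : (gb : ℝ) ≤ (f : ℝ) * q := by exact_mod_cast hgb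
  have hg1R : (1 : ℝ) ≤ (g : ℝ) := by exact_mod_cast hg1
  have hfqpos : (0 : ℝ) < (f : ℝ) * q := by
    have h1 : (1 : ℝ) ≤ f := by exact_mod_cast hf
    have h2 : (1 : ℝ) ≤ q := by exact_mod_cast hq
    nlinarith
  have hgpos : (0 : ℝ) < g := by linarith
  constructor
  · apply aux_gap _ _ _ hNpos
    · positivity
    · have : (gb : ℝ) / g ≤ (gb : ℝ) := by
        rw [div_le_iff₀ hgpos]
        nlinarith [Nat.cast_nonneg (α := ℝ) gb]
      linarith
  · have heq : (N : ℝ) * (gb : ℝ) * (1 + 1 / ((f : ℝ) * q))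
        = (N : ℝ) * ((gb : ℝ) * (1 + 1 / ((f : ℝ) * q))) := by ring
    rw [heq]
    apply aux_gap _ _ _ hNpos
    · have hgbpos : (0 : ℝ) < gb := by
        rcases hg with ⟨_, h⟩ | ⟨_, h⟩ <;> subst h
        · exact_mod_cast hq
        · exact_mod_cast hf
      positivity
    · have h1 : (gb : ℝ) * (1 + 1 / ((f : ℝ) * q))
          ≤ ((f : ℝ) * q) * (1 + 1 / ((f : ℝ) * q)) := by
        have : (0 : ℝ) < 1 + 1 / ((f : ℝ) * q) := by positivity
        nlinarith
      have h2 : ((f : ℝ) * q) * (1 + 1 / ((f : ℝ) * q)) = (f : ℝ) * q + 1 := by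
        field_simp
      linarith
end

section
/- In the SCSA(1) scheme with distinct evaluation points α_1,...,α_N satisfying j + α_i ≠ 0 for all j ∈ [1:r], the server computations Σ_{j=1}^r Ã_i^{(j)} B̃_i^{(j)} equal F(α_i), where F(α) = Σ_{j=1}^r (1/(j+α)) A B_j + Σ_{s=1}^{2ℓ} α^{s-1} X_{r+s} for some matrices X_{r+s} not depending on i; i.e., desired products A B_j appear only in the rational part and all noise cross-terms appear only in the polynomial part of degree ≤ 2ℓ−1. -/
lemma pow_smul_expand {F : Type*} [Field F] {M' : Type*} [AddCommMonoid M'] [Module F M']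
    (L k : ℕ) (hk : k < L) (b a : F) (M : M') :
    (b + a) ^ k • M = ∑ s : Fin L, a ^ (s : ℕ) • (((k.choose s : F) * b ^ (k - (s : ℕ))) • M) := by
  have h : (b + a) ^ k = ∑ s : Fin L, a ^ (s : ℕ) * ((k.choose s : F) * b ^ (k - (s : ℕ))) := by
    rw [Fin.sum_univ_eq_sum_range (fun s => a ^ s * ((k.choose s : F) * b ^ (k - s))) L]
    have h2 : ∑ s ∈ Finset.range L, a ^ s * ((k.choose s : F) * b ^ (k - s))
        = ∑ s ∈ Finset.range (k+1), a ^ s * ((k.choose s : F) * b ^ (k - s)) := by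
      refine (Finset.sum_subset (Finset.range_subset_range.2 hk) fun x _ hx => ?_).symm
      simp only [Finset.mem_range, not_lt] at hx
      simp [Nat.choose_eq_zero_of_lt (by omega : k < x)]
    rw [h2, add_comm b a, add_pow]
    exact Finset.sum_congr rfl fun x _ => by ring
  rw [h, Finset.sum_smul]
  exact Finset.sum_congr rfl fun s _ => (mul_smul _ _ _)



/-- In SCSA(1) with distinct evaluation points `α₁,…,α_N`
satisfying `j + αᵢ ≠ 0` for all `j ∈ [1:r]` (`r = N − 2ℓ`), the server
computations `Σ_{j=1}^r Ãᵢ⁽ʲ⁾ B̃ᵢ⁽ʲ⁾` equal `F(αᵢ)` where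
`F(α) = Σ_j (1/(j+α)) A Bⱼ + Σ_{s=1}^{2ℓ} α^{s-1} X_{r+s}` for matrices
`X_{r+s}` not depending on `i`: desired products appear only in the rational
part and noise cross-terms only in the polynomial part of degree `≤ 2ℓ−1`. -/
theorem scsa_server_output_form {F : Type*} [Field F]
    (m n p N r ℓ : ℕ) (hr : 0 < r) (hℓ : 1 ≤ ℓ) (hN : N = r + 2 * ℓ)
    (α : Fin N → F) (hinj : Function.Injective α)
    (hne : ∀ (i : Fin N) (j : Fin r), ((j : ℕ) + 1 : F) + α i ≠ 0)
    (A : Matrix (Fin m) (Fin n) F)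
    (Bp : Fin r → Matrix (Fin n) (Fin p) F)
    (Z : Fin r → Fin ℓ → Matrix (Fin m) (Fin n) F)
    (Z' : Fin r → Fin ℓ → Matrix (Fin n) (Fin p) F)
    (At : Fin N → Fin r → Matrix (Fin m) (Fin n) F)
    (Bt : Fin N → Fin r → Matrix (Fin n) (Fin p) F)
    (hAt : ∀ i j, At i j = (((j : ℕ) + 1 : F) + α i)⁻¹ •
      (A + ∑ k : Fin ℓ, (((j : ℕ) + 1 : F) + α i) ^ ((k : ℕ) + 1) • Z j k))
    (hBt : ∀ i j, Bt i j = Bp j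
      + ∑ k : Fin ℓ, (((j : ℕ) + 1 : F) + α i) ^ ((k : ℕ) + 1) • Z' j k) :
    ∃ X : Fin (2 * ℓ) → Matrix (Fin m) (Fin p) F,
      ∀ i, ∑ j : Fin r, At i j * Bt i j
        = ∑ j : Fin r, (((j : ℕ) + 1 : F) + α i)⁻¹ • (A * Bp j)
          + ∑ s : Fin (2 * ℓ), (α i) ^ (s : ℕ) • X s := by
  refine ⟨fun s => ∑ j : Fin r,
    ((∑ k : Fin ℓ, (((k : ℕ).choose s : F) * ((j : ℕ) + 1 : F) ^ ((k : ℕ) - (s : ℕ))) •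
        (A * Z' j k + Z j k * Bp j))
      + ∑ k : Fin ℓ, ∑ k' : Fin ℓ,
        ((((k : ℕ) + (k' : ℕ) + 1).choose s : F) *
          ((j : ℕ) + 1 : F) ^ (((k : ℕ) + (k' : ℕ) + 1) - (s : ℕ))) • (Z j k * Z' j k')), ?_⟩
  intro i
  have key : ∀ j : Fin r, At i j * Bt i j
      = (((j : ℕ) + 1 : F) + α i)⁻¹ • (A * Bp j)
        + ((∑ k : Fin ℓ, (((j : ℕ) + 1 : F) + α i) ^ (k : ℕ) • (A * Z' j k + Z j k * Bp j))
          + ∑ k : Fin ℓ, ∑ k' : Fin ℓ,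
            (((j : ℕ) + 1 : F) + α i) ^ ((k : ℕ) + (k' : ℕ) + 1) • (Z j k * Z' j k')) := by
    intro j
    rw [hAt, hBt]
    set c : F := ((j : ℕ) + 1 : F) + α i with hc
    have hc0 : c ≠ 0 := hne i j
    have h1 : ∀ t : ℕ, c⁻¹ * c ^ (t + 1) = c ^ t := fun t => by
      rw [pow_succ', ← mul_assoc, inv_mul_cancel₀ hc0, one_mul]
    have h2 : ∀ t u : ℕ, c⁻¹ * (c ^ (t + 1) * c ^ (u + 1)) = c ^ (t + u + 1) := fun t u => by
      rw [← pow_add, show t + 1 + (u + 1) = (t + u + 1) + 1 by ring, h1]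
    have e1 : A * (∑ k : Fin ℓ, c ^ ((k : ℕ) + 1) • Z' j k)
        = ∑ k : Fin ℓ, c ^ ((k : ℕ) + 1) • (A * Z' j k) := by
      rw [Matrix.mul_sum]
      exact Finset.sum_congr rfl fun k _ => Matrix.mul_smul ..
    have e2 : (∑ k : Fin ℓ, c ^ ((k : ℕ) + 1) • Z j k) * Bp j
        = ∑ k : Fin ℓ, c ^ ((k : ℕ) + 1) • (Z j k * Bp j) := by
      rw [Matrix.sum_mul]
      exact Finset.sum_congr rfl fun k _ => Matrix.smul_mul ..
    have e3 : (∑ k : Fin ℓ, c ^ ((k : ℕ) + 1) • Z j k) *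
          (∑ k : Fin ℓ, c ^ ((k : ℕ) + 1) • Z' j k)
        = ∑ k : Fin ℓ, ∑ k' : Fin ℓ,
            (c ^ ((k : ℕ) + 1) * c ^ ((k' : ℕ) + 1)) • (Z j k * Z' j k') := by
      rw [Matrix.sum_mul]
      refine Finset.sum_congr rfl fun k _ => ?_
      rw [Matrix.smul_mul, Matrix.mul_sum, Finset.smul_sum]
      refine Finset.sum_congr rfl fun k' _ => ?_
      rw [Matrix.mul_smul, smul_smul]
    rw [Matrix.smul_mul, Matrix.mul_add, Matrix.add_mul, Matrix.add_mul, e1, e2, e3]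
    simp only [smul_add, Finset.smul_sum, smul_smul, h1, h2, Finset.sum_add_distrib]
    abel
  calc ∑ j : Fin r, At i j * Bt i j
      = ∑ j : Fin r, ((((j : ℕ) + 1 : F) + α i)⁻¹ • (A * Bp j)
        + ((∑ k : Fin ℓ, (((j : ℕ) + 1 : F) + α i) ^ (k : ℕ) • (A * Z' j k + Z j k * Bp j))
          + ∑ k : Fin ℓ, ∑ k' : Fin ℓ,
            (((j : ℕ) + 1 : F) + α i) ^ ((k : ℕ) + (k' : ℕ) + 1) • (Z j k * Z' j k'))) :=
        Finset.sum_congr rfl fun j _ => key j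
    _ = ∑ j : Fin r, (((j : ℕ) + 1 : F) + α i)⁻¹ • (A * Bp j)
        + ∑ j : Fin r, ((∑ k : Fin ℓ, (((j : ℕ) + 1 : F) + α i) ^ (k : ℕ) • (A * Z' j k + Z j k * Bp j))
          + ∑ k : Fin ℓ, ∑ k' : Fin ℓ,
            (((j : ℕ) + 1 : F) + α i) ^ ((k : ℕ) + (k' : ℕ) + 1) • (Z j k * Z' j k')) :=
        Finset.sum_add_distrib
    _ = _ := by
        congr 1
        -- expand each power via pow_smul_expand and swap sums
        have expand : ∀ j : Fin r,
            (∑ k : Fin ℓ, (((j : ℕ) + 1 : F) + α i) ^ (k : ℕ) • (A * Z' j k + Z j k * Bp j))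
            + ∑ k : Fin ℓ, ∑ k' : Fin ℓ,
              (((j : ℕ) + 1 : F) + α i) ^ ((k : ℕ) + (k' : ℕ) + 1) • (Z j k * Z' j k')
            = ∑ s : Fin (2 * ℓ), (α i) ^ (s : ℕ) •
              ((∑ k : Fin ℓ, (((k : ℕ).choose s : F) * ((j : ℕ) + 1 : F) ^ ((k : ℕ) - (s : ℕ))) •
                  (A * Z' j k + Z j k * Bp j))
                + ∑ k : Fin ℓ, ∑ k' : Fin ℓ,
                  ((((k : ℕ) + (k' : ℕ) + 1).choose s : F) *
                    ((j : ℕ) + 1 : F) ^ (((k : ℕ) + (k' : ℕ) + 1) - (s : ℕ))) • (Z j k * Z' j k')) := by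
          intro j
          have e1 : (∑ k : Fin ℓ, (((j : ℕ) + 1 : F) + α i) ^ (k : ℕ) • (A * Z' j k + Z j k * Bp j))
              = ∑ s : Fin (2 * ℓ), (α i) ^ (s : ℕ) •
                ∑ k : Fin ℓ, (((k : ℕ).choose s : F) * ((j : ℕ) + 1 : F) ^ ((k : ℕ) - (s : ℕ))) •
                  (A * Z' j k + Z j k * Bp j) := by
            calc (∑ k : Fin ℓ, (((j : ℕ) + 1 : F) + α i) ^ (k : ℕ) • (A * Z' j k + Z j k * Bp j))
                = ∑ k : Fin ℓ, ∑ s : Fin (2 * ℓ), (α i) ^ (s : ℕ) •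
                    ((((k : ℕ).choose s : F) * ((j : ℕ) + 1 : F) ^ ((k : ℕ) - (s : ℕ))) •
                      (A * Z' j k + Z j k * Bp j)) :=
                  Finset.sum_congr rfl fun k _ => pow_smul_expand (2 * ℓ) (k : ℕ)
                    (Nat.lt_of_lt_of_le k.isLt (by omega)) _ _ _
              _ = ∑ s : Fin (2 * ℓ), ∑ k : Fin ℓ, (α i) ^ (s : ℕ) •
                    ((((k : ℕ).choose s : F) * ((j : ℕ) + 1 : F) ^ ((k : ℕ) - (s : ℕ))) •
                      (A * Z' j k + Z j k * Bp j)) := Finset.sum_comm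
              _ = _ := Finset.sum_congr rfl fun s _ => (Finset.smul_sum).symm
          have e2 : (∑ k : Fin ℓ, ∑ k' : Fin ℓ,
                (((j : ℕ) + 1 : F) + α i) ^ ((k : ℕ) + (k' : ℕ) + 1) • (Z j k * Z' j k'))
              = ∑ s : Fin (2 * ℓ), (α i) ^ (s : ℕ) •
                ∑ k : Fin ℓ, ∑ k' : Fin ℓ,
                  ((((k : ℕ) + (k' : ℕ) + 1).choose s : F) *
                    ((j : ℕ) + 1 : F) ^ (((k : ℕ) + (k' : ℕ) + 1) - (s : ℕ))) • (Z j k * Z' j k') := by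
            calc (∑ k : Fin ℓ, ∑ k' : Fin ℓ,
                  (((j : ℕ) + 1 : F) + α i) ^ ((k : ℕ) + (k' : ℕ) + 1) • (Z j k * Z' j k'))
                = ∑ k : Fin ℓ, ∑ k' : Fin ℓ, ∑ s : Fin (2 * ℓ), (α i) ^ (s : ℕ) •
                    (((((k : ℕ) + (k' : ℕ) + 1).choose s : F) *
                      ((j : ℕ) + 1 : F) ^ (((k : ℕ) + (k' : ℕ) + 1) - (s : ℕ))) • (Z j k * Z' j k')) :=
                  Finset.sum_congr rfl fun k _ => Finset.sum_congr rfl fun k' _ =>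
                    pow_smul_expand (2 * ℓ) ((k : ℕ) + (k' : ℕ) + 1)
                      (by have := k.isLt; have := k'.isLt; omega) _ _ _
              _ = ∑ k : Fin ℓ, ∑ s : Fin (2 * ℓ), ∑ k' : Fin ℓ, (α i) ^ (s : ℕ) •
                    (((((k : ℕ) + (k' : ℕ) + 1).choose s : F) *
                      ((j : ℕ) + 1 : F) ^ (((k : ℕ) + (k' : ℕ) + 1) - (s : ℕ))) • (Z j k * Z' j k')) :=
                  Finset.sum_congr rfl fun k _ => Finset.sum_comm
              _ = ∑ s : Fin (2 * ℓ), ∑ k : Fin ℓ, ∑ k' : Fin ℓ, (α i) ^ (s : ℕ) •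
                    (((((k : ℕ) + (k' : ℕ) + 1).choose s : F) *
                      ((j : ℕ) + 1 : F) ^ (((k : ℕ) + (k' : ℕ) + 1) - (s : ℕ))) • (Z j k * Z' j k')) :=
                  Finset.sum_comm
              _ = _ := Finset.sum_congr rfl fun s _ => by
                    rw [Finset.smul_sum]
                    exact Finset.sum_congr rfl fun k _ => (Finset.smul_sum).symm
          rw [e1, e2, ← Finset.sum_add_distrib]
          exact Finset.sum_congr rfl fun s _ => (smul_add _ _ _).symm
        rw [Finset.sum_congr rfl fun j _ => expand j, Finset.sum_comm]
        simp only [Finset.smul_sum]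
end

section
/- For fixed ℓ ≥ 1 and recovery constraint fq + g + 2ℓ − 1 ≤ N with g ∈ {f,q}, the downlink cost K_DL(f,q,g) = (fq + g + 2ℓ − 1)/(fq) is minimized over admissible integer triples (f,q,g) by taking f = 1, g = 1, q = N − 2ℓ, yielding K_DL = N/(N−2ℓ). -/
/-- For fixed `ℓ ≥ 1` and the recovery constraint
`fq + g + 2ℓ − 1 ≤ N` with `g ∈ {f,q}`, the downlink cost
`K_DL(f,q,g) = (fq + g + 2ℓ − 1)/(fq)` is minimized over admissible integer
triples by `f = 1, g = 1, q = N − 2ℓ`, yielding `K_DL = N/(N−2ℓ)`. -/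
theorem downlink_cost_minimization
    (ℓ N : ℕ) (hℓ : 1 ≤ ℓ) (hN : 2 * ℓ < N) :
    (∀ f q g : ℕ, 1 ≤ f → 1 ≤ q → (g = f ∨ g = q) →
      f * q + g + 2 * ℓ - 1 ≤ N →
      (N : ℝ) / ((N : ℝ) - 2 * (ℓ : ℝ))
        ≤ ((f * q + g + 2 * ℓ - 1 : ℕ) : ℝ) / ((f * q : ℕ) : ℝ))
    ∧ 1 * (N - 2 * ℓ) + 1 + 2 * ℓ - 1 ≤ N
    ∧ ((1 * (N - 2 * ℓ) + 1 + 2 * ℓ - 1 : ℕ) : ℝ) / ((1 * (N - 2 * ℓ) : ℕ) : ℝ)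
        = (N : ℝ) / ((N : ℝ) - 2 * (ℓ : ℝ)) := by
  have hd : (0 : ℝ) < (N : ℝ) - 2 * (ℓ : ℝ) := by
    have h : ((2 * ℓ : ℕ) : ℝ) < (N : ℝ) := by exact_mod_cast hN
    push_cast at h
    linarith
  refine ⟨?_, by omega, ?_⟩
  · intro f q g hf hq hg hle
    have hg1 : 1 ≤ g := by rcases hg with h | h <;> omega
    have hP : 1 ≤ f * q := Nat.one_le_iff_ne_zero.mpr (by positivity)
    have hm : f * q + g + 2 * ℓ - 1 = f * q + g + 2 * ℓ - 1 := rfl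
    have key : f * q + 2 * ℓ ≤ f * q + g + 2 * ℓ - 1 := by omega
    have hPle : f * q + 2 * ℓ ≤ N := by omega
    have hPr : (0 : ℝ) < ((f * q : ℕ) : ℝ) := by exact_mod_cast hP
    rw [div_le_div_iff₀ hd hPr]
    have hmcast : ((f * q + g + 2 * ℓ - 1 : ℕ) : ℝ) = (f : ℝ) * q + g + 2 * ℓ - 1 := by
      have : (f * q + g + 2 * ℓ - 1 : ℕ) + 1 = f * q + g + 2 * ℓ := by omega
      have := congrArg (fun n : ℕ => (n : ℝ)) this
      push_cast at this
      linarith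
    have hgr : (1 : ℝ) ≤ (g : ℝ) := by exact_mod_cast hg1
    have hPler : (f : ℝ) * q + 2 * ℓ ≤ (N : ℝ) := by exact_mod_cast hPle
    push_cast
    rw [hmcast]
    nlinarith [hPr, hd, mul_pos hPr hd]
  · have h1 : 1 * (N - 2 * ℓ) + 1 + 2 * ℓ - 1 = N := by omega
    have h2 : 1 * (N - 2 * ℓ) = N - 2 * ℓ := by omega
    rw [h1, h2]
    have : ((N - 2 * ℓ : ℕ) : ℝ) = (N : ℝ) - 2 * (ℓ : ℝ) := by
      have : 2 * ℓ ≤ N := by omega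
      push_cast [this]
      ring
    rw [this]
end
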